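/- The function F(z) = 1/sin²(z + π/3) satisfies the functional equation: for all complex x, y, z with x + y + z = 0 and sin(x + π/3) ≠ 0, sin(y + π/3) ≠ 0, sin(z + π/3) ≠ 0, the determinant of the 3×3 matrix with rows (1, 1, 1), (F(x), F(y), F(z)), (F'(x), F'(y), F'(z))) vanishes. -/

import Mathlib

/-!
In terms of `p = cot w` one has `1 / sin² w = 1 + p²` and `(1 / sin² w)' = -2 p (1 + p²)`.
If `a + b + c = π`, the cotangents `p, q, r` of `a, b, c` satisfy `pq + qr + rp = 1`, and the
determinant, a polynomial in `p, q, r`, is `-2 (q - p)(r - p)(r - q)(pq + qr + rp - 1)`.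
The shifted points `x + π/3, y + π/3, z + π/3` sum to `π` because `x + y + z = 0`.
-/

open Complex Real

theorem det_eq_zero_of_mul_add_mul_add_mul_eq_one {R : Type*} [CommRing R] {p q r : R}
    (h : p * q + q * r + r * p = 1) :
    Matrix.det !![1, 1, 1;
      1 + p ^ 2, 1 + q ^ 2, 1 + r ^ 2;
      -2 * p * (1 + p ^ 2), -2 * q * (1 + q ^ 2), -2 * r * (1 + r ^ 2)] = 0 := by
  rw [Matrix.det_fin_three]
  simp only [Matrix.of_apply, Matrix.cons_val', Matrix.cons_val_zero, Matrix.cons_val_one,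
    Matrix.cons_val_two, Matrix.empty_val', Matrix.cons_val_fin_one, Matrix.head_cons,
    Matrix.tail_cons, Matrix.head_fin_const]
  linear_combination (-2 * (q - p) * (r - p) * (r - q)) * h

theorem Complex.cot_mul_cot_add_cot_mul_cot_add_cot_mul_cot_eq_one {a b c : ℂ}
    (habc : a + b + c = π) (ha : sin a ≠ 0) (hb : sin b ≠ 0) (hc : sin c ≠ 0) :
    cot a * cot b + cot b * cot c + cot c * cot a = 1 := by
  have hc_eq : c = π - (a + b) := by linear_combination habc
  have hsin : sin c = sin a * cos b + cos a * sin b := by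
    rw [hc_eq, Complex.sin_pi_sub, Complex.sin_add]
  have hcos : cos c = sin a * sin b - cos a * cos b := by
    rw [hc_eq, Complex.cos_pi_sub, Complex.cos_add]; ring
  rw [hsin] at hc
  simp only [cot_eq_cos_div_sin, hsin, hcos]
  field_simp
  ring

theorem Complex.one_div_sin_sq_eq_one_add_cot_sq {w : ℂ} (hw : sin w ≠ 0) :
    1 / sin w ^ 2 = 1 + cot w ^ 2 := by
  rw [cot_eq_cos_div_sin]
  field_simp
  linear_combination (sin_sq_add_cos_sq w).symm

theorem Complex.hasDerivAt_one_div_sin_sq {w : ℂ} (hw : sin w ≠ 0) :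
    HasDerivAt (fun w => 1 / sin w ^ 2) (-2 * cot w * (1 + cot w ^ 2)) w := by
  have h := ((hasDerivAt_sin w).fun_pow 2).fun_inv (pow_ne_zero 2 hw)
  simp only [one_div]
  refine h.congr_deriv ?_
  rw [cot_eq_cos_div_sin]
  norm_num
  field_simp
  linear_combination cos w * sin_sq_add_cos_sq w

theorem Complex.det_one_div_sin_sq_eq_zero {a b c : ℂ} (habc : a + b + c = π)
    (ha : sin a ≠ 0) (hb : sin b ≠ 0) (hc : sin c ≠ 0) :
    Matrix.det !![(1 : ℂ), 1, 1;
      1 / sin a ^ 2, 1 / sin b ^ 2, 1 / sin c ^ 2;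
      deriv (fun w => 1 / sin w ^ 2) a, deriv (fun w => 1 / sin w ^ 2) b,
        deriv (fun w => 1 / sin w ^ 2) c] = 0 := by
  rw [one_div_sin_sq_eq_one_add_cot_sq ha, one_div_sin_sq_eq_one_add_cot_sq hb,
    one_div_sin_sq_eq_one_add_cot_sq hc, (hasDerivAt_one_div_sin_sq ha).deriv,
    (hasDerivAt_one_div_sin_sq hb).deriv, (hasDerivAt_one_div_sin_sq hc).deriv]
  exact det_eq_zero_of_mul_add_mul_add_mul_eq_one
    (cot_mul_cot_add_cot_mul_cot_add_cot_mul_cot_eq_one habc ha hb hc)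

/-- the shifted function `F(z) = 1/sin²(z + π/3)` satisfies the
determinantal functional equation
`det [[1,1,1],[F(x),F(y),F(z)],[F'(x),F'(y),F'(z)]] = 0` whenever `x + y + z = 0`
and the (shifted) sines are nonzero. -/
theorem stmt_4 :
    ∀ x y z : ℂ, x + y + z = 0 →
      Complex.sin (x + Real.pi / 3) ≠ 0 →
      Complex.sin (y + Real.pi / 3) ≠ 0 →
      Complex.sin (z + Real.pi / 3) ≠ 0 →
      Matrix.det !![(1 : ℂ), 1, 1;
                    1 / Complex.sin (x + Real.pi / 3) ^ 2,
                      1 / Complex.sin (y + Real.pi / 3) ^ 2,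
                      1 / Complex.sin (z + Real.pi / 3) ^ 2;
                    deriv (fun w => 1 / Complex.sin (w + Real.pi / 3) ^ 2) x,
                      deriv (fun w => 1 / Complex.sin (w + Real.pi / 3) ^ 2) y,
                      deriv (fun w => 1 / Complex.sin (w + Real.pi / 3) ^ 2) z] = 0 := by
  intro x y z hxyz hx hy hz
  have hshift : x + π / 3 + (y + π / 3) + (z + π / 3) = π := by linear_combination hxyz
  simp only [deriv_comp_add_const (f := fun w : ℂ => 1 / Complex.sin w ^ 2)]
  exact det_one_div_sin_sq_eq_zero hshift hx hy hz
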